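/- arXiv:2502.12937 — 4 statements merged into one kernel-verified Lean document; each statement's English description precedes it below -/
import Mathlib

section
/- A function f(x) = Σ_{i=1}^n a_i e^{b_i x} with nonzero real coefficients a_i and distinct real exponents b_i has at most n-1 real roots. -/
open Set

lemma rolle_count {f : ℝ → ℝ} (hf : Differentiable ℝ f) {k : ℕ}
    (hfin : {x : ℝ | deriv f x = 0}.Finite)
    (hcard : {x : ℝ | deriv f x = 0}.ncard ≤ k) :
    {x : ℝ | f x = 0}.Finite ∧ {x : ℝ | f x = 0}.ncard ≤ k + 1 := by
  set Z := {x : ℝ | f x = 0} with hZ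
  have key : ∀ S : Finset ℝ, ↑S ⊆ Z → S.card ≠ k + 2 := by
    intro S hS hSc
    set e := S.orderIsoOfFin hSc with he
    have hz : ∀ i : Fin (k + 2), f (e i : ℝ) = 0 := fun i => hS (e i).2
    have hmono : ∀ {i j : Fin (k + 2)}, i < j → (e i : ℝ) < (e j : ℝ) := by
      intro i j hij
      exact_mod_cast e.strictMono hij
    have hex : ∀ i : Fin (k + 1),
        ∃ c ∈ Set.Ioo ((e i.castSucc : ℝ)) ((e i.succ : ℝ)), deriv f c = 0 := by
      intro i
      exact exists_deriv_eq_zero (hmono (Fin.castSucc_lt_succ : i.castSucc < i.succ))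
        hf.continuous.continuousOn (by rw [hz, hz])
    choose c hc hc0 using hex
    have hinj : Function.Injective c := by
      have horder : ∀ {i j : Fin (k + 1)}, i < j → c i < c j := by
        intro i j hij
        have h1 : c i < (e i.succ : ℝ) := (hc i).2
        have h2 : (e j.castSucc : ℝ) < c j := (hc j).1
        have h3 : (e i.succ : ℝ) ≤ (e j.castSucc : ℝ) := by
          rcases eq_or_lt_of_le (show i.succ ≤ j.castSucc by
            simp only [Fin.le_def, Fin.lt_def, Fin.val_succ, Fin.coe_castSucc] at hij ⊢
            omega) with h | h
          · rw [h]
          · exact (hmono h).le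
        linarith
      intro i j hij
      by_contra hne
      rcases Ne.lt_or_gt hne with h | h
      · exact absurd hij (horder h).ne
      · exact absurd hij.symm (horder h).ne
    have hle : k + 1 ≤ hfin.toFinset.card := by
      have := Finset.card_le_card_of_injOn (s := Finset.univ) (t := hfin.toFinset) c
        (fun i _ => hfin.mem_toFinset.2 (hc0 i)) hinj.injOn
      simpa using this
    rw [Set.ncard_eq_toFinset_card _ hfin] at hcard
    omega
  have hfinZ : Z.Finite := by
    by_contra h
    obtain ⟨S, hS, hSc⟩ := (show Z.Infinite from h).exists_subset_card_eq (k + 2)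
    exact key S hS hSc
  refine ⟨hfinZ, ?_⟩
  by_contra hlt
  push_neg at hlt
  have hcard' : k + 2 ≤ hfinZ.toFinset.card := by
    rw [Set.ncard_eq_toFinset_card _ hfinZ] at hlt; omega
  obtain ⟨S, hS, hSc⟩ := Finset.exists_subset_card_eq hcard'
  exact key S (fun x hx => hfinZ.mem_toFinset.1 (hS hx)) hSc

/-- A function `f(x) = Σ_{i=1}^n a_i e^{b_i x}` with nonzero real coefficients `a_i` and
pairwise distinct real exponents `b_i` has at most `n-1` real roots. -/
theorem stmt_0 (n : ℕ) (hn : 1 ≤ n) (a b : Fin n → ℝ)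
    (ha : ∀ i, a i ≠ 0) (hb : Function.Injective b) :
    {x : ℝ | ∑ i, a i * Real.exp (b i * x) = 0}.Finite ∧
    {x : ℝ | ∑ i, a i * Real.exp (b i * x) = 0}.ncard ≤ n - 1 := by
  induction n, hn using Nat.le_induction with
  | base =>
    have : {x : ℝ | ∑ i, a i * Real.exp (b i * x) = 0} = ∅ := by
      ext x
      simp only [Set.mem_setOf_eq, Set.mem_empty_iff_false, iff_false, Fin.sum_univ_one]
      exact mul_ne_zero (ha 0) (Real.exp_ne_zero _)
    rw [this]
    simp
  | succ n hn ih =>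
    set L := Fin.last n with hL
    set c : Fin (n + 1) → ℝ := fun i => b i - b L with hc
    set g : ℝ → ℝ := fun x => ∑ i, a i * Real.exp (c i * x) with hg
    -- the zero sets of f and g coincide
    have hset : {x : ℝ | ∑ i, a i * Real.exp (b i * x) = 0} = {x : ℝ | g x = 0} := by
      ext x
      simp only [Set.mem_setOf_eq, hg]
      have : ∀ i, a i * Real.exp (b i * x)
          = Real.exp (b L * x) * (a i * Real.exp (c i * x)) := by
        intro i
        rw [hc, sub_mul, Real.exp_sub]
        field_simp
      rw [Finset.sum_congr rfl fun i _ => this i, ← Finset.mul_sum]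
      simp [Real.exp_ne_zero]
    rw [hset]
    -- derivative of g
    have hderiv : ∀ x : ℝ, HasDerivAt g (∑ i, a i * c i * Real.exp (c i * x)) x := by
      intro x
      have h1 : ∀ i : Fin (n + 1), HasDerivAt (fun y => a i * Real.exp (c i * y))
          (a i * c i * Real.exp (c i * x)) x := by
        intro i
        have := (((hasDerivAt_id x).const_mul (c i)).exp).const_mul (a i)
        simp only [id_eq] at this
        refine this.congr_deriv ?_
        ring
      have := HasDerivAt.fun_sum (fun i (_ : i ∈ Finset.univ) => h1 i)
      simpa using this
    have hdiff : Differentiable ℝ g := fun x => (hderiv x).differentiableAt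
    have hderiv' : ∀ x : ℝ, deriv g x = ∑ i, a i * c i * Real.exp (c i * x) :=
      fun x => (hderiv x).deriv
    -- deriv g is an exponential sum with n terms
    set a' : Fin n → ℝ := fun i => a i.castSucc * c i.castSucc with ha'
    set b' : Fin n → ℝ := fun i => c i.castSucc with hb'
    have hsum : ∀ x : ℝ, deriv g x = ∑ i : Fin n, a' i * Real.exp (b' i * x) := by
      intro x
      rw [hderiv', Fin.sum_univ_castSucc]
      simp [hc, ha', hb', hL]
    have ha'0 : ∀ i, a' i ≠ 0 := by
      intro i
      refine mul_ne_zero (ha _) ?_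
      rw [hc, sub_ne_zero]
      intro h
      exact absurd (hb h) (Fin.castSucc_lt_last i).ne
    have hb'inj : Function.Injective b' := by
      intro i j hij
      have : b i.castSucc = b j.castSucc := by
        have := hij
        simp only [hb', hc] at this
        linarith
      exact Fin.castSucc_injective n (hb this)
    obtain ⟨hfin, hcard⟩ := ih a' b' ha'0 hb'inj
    have hset2 : {x : ℝ | deriv g x = 0}
        = {x : ℝ | ∑ i : Fin n, a' i * Real.exp (b' i * x) = 0} := by
      ext x; simp [hsum x]
    obtain ⟨h1, h2⟩ := rolle_count hdiff (hset2 ▸ hfin) (le_trans (le_of_eq (by rw [hset2])) hcard)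
    refine ⟨h1, ?_⟩
    omega
end

section
/- In the local and global consistency algorithm on the 4-node star graph with center node 1 connected to nodes 2,3 (weight 1) and node 4 (weight x > 0), the sign of the score difference F*_{4,2} − F*_{4,1} equals the sign of 2α − √(x+2), where F* = (1−α)(I − αS)^{-1} Y with label matrix Y having Y_{11}=1, Y_{22}=Y_{32}=1 and all other entries zero. -/
set_option maxHeartbeats 2000000 in
private lemma aux_mg (s t α : ℝ) (hs0 : 0 < s) (hst : s^2 = t^2 + 2)
    (h1α : (0:ℝ) < 1 + α) :
    (1 - α • !![0, 1/s, 1/s, t/s; 1/s, 0, 0, 0; 1/s, 0, 0, 0; t/s, 0, 0, 0]) *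
      !![1/(1+α), 2*α/(s*(1+α));
         α/(s*(1+α)), 1-α + 2*α^2/(s^2*(1+α));
         α/(s*(1+α)), 1-α + 2*α^2/(s^2*(1+α));
         α*t/(s*(1+α)), 2*α^2*t/(s^2*(1+α))]
    = (1 - α) • !![(1:ℝ), 0; 0, 1; 0, 1; 0, 0] := by
  ext i j
  fin_cases i <;> fin_cases j <;>
    simp [Matrix.mul_apply, Fin.sum_univ_four, Matrix.sub_apply, Matrix.one_apply,
      Matrix.smul_apply, Matrix.vecHead, Matrix.vecTail] <;> field_simp
  · linear_combination (α^2) * hst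
  · linear_combination (2*α^3) * hst
  all_goals ring

set_option maxHeartbeats 2000000 in
private lemma aux_det (s t α : ℝ) (hst : s^2 = t^2 + 2) (hs0 : 0 < s) :
    (!![1, -(α/s), -(α/s), -(α*t/s);
        -(α/s), 1, 0, 0;
        -(α/s), 0, 1, 0;
        -(α*t/s), 0, 0, 1] : Matrix (Fin 4) (Fin 4) ℝ).det = 1 - α^2 := by
  simp [Matrix.det_succ_row_zero, Fin.sum_univ_succ, Matrix.vecHead, Matrix.vecTail,
    Fin.succAbove]
  field_simp
  linear_combination (α^2) * hst

set_option maxHeartbeats 2000000 in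
/-- In the local and global consistency algorithm on the 4-node star graph with center
node `0` connected to nodes `1,2` (weight `1`) and node `3` (weight `x > 0`), the sign
of the score difference `F*_{4,2} − F*_{4,1}` equals the sign of `2α − √(x+2)`, where
`F* = (1−α)(I − αS)^{-1} Y`. -/
theorem stmt_5 (x α : ℝ) (hx : 0 < x) (hα : α ∈ Set.Ioo (0 : ℝ) 1)
    (W S Dinvsqrt : Matrix (Fin 4) (Fin 4) ℝ) (Y : Matrix (Fin 4) (Fin 2) ℝ)
    (hW : W = !![0, 1, 1, x; 1, 0, 0, 0; 1, 0, 0, 0; x, 0, 0, 0])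
    (hD : Dinvsqrt = Matrix.diagonal ![1 / Real.sqrt (x + 2), 1, 1, 1 / Real.sqrt x])
    (hS : S = Dinvsqrt * W * Dinvsqrt)
    (hY : Y = !![1, 0; 0, 1; 0, 1; 0, 0])
    (F : Matrix (Fin 4) (Fin 2) ℝ)
    (hF : F = (1 - α) • ((1 - α • S)⁻¹ * Y)) :
    Real.sign (F 3 1 - F 3 0) = Real.sign (2 * α - Real.sqrt (x + 2)) := by
  obtain ⟨hα0, hα1⟩ := hα
  have hs0 : 0 < Real.sqrt (x + 2) := Real.sqrt_pos.2 (by linarith)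
  have ht0 : 0 < Real.sqrt x := Real.sqrt_pos.2 hx
  set s := Real.sqrt (x + 2) with hsdef
  set t := Real.sqrt x with htdef
  have hs2 : s ^ 2 = x + 2 := Real.sq_sqrt (by linarith)
  have ht2 : t ^ 2 = x := Real.sq_sqrt hx.le
  have hst : s ^ 2 = t ^ 2 + 2 := by rw [hs2, ht2]
  have h1α : (0:ℝ) < 1 + α := by linarith
  have hSe : S = !![0, 1/s, 1/s, t/s; 1/s, 0, 0, 0; 1/s, 0, 0, 0; t/s, 0, 0, 0] := by
    subst hS hD hW
    ext i j
    fin_cases i <;> fin_cases j <;>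
      · simp [Matrix.mul_apply, Fin.sum_univ_four, Matrix.diagonal,
          Matrix.vecHead, Matrix.vecTail]
        try field_simp
        try nlinarith [hs2, ht2, hs0, ht0]
  set G : Matrix (Fin 4) (Fin 2) ℝ :=
    !![1/(1+α), 2*α/(s*(1+α));
       α/(s*(1+α)), 1-α + 2*α^2/(s^2*(1+α));
       α/(s*(1+α)), 1-α + 2*α^2/(s^2*(1+α));
       α*t/(s*(1+α)), 2*α^2*t/(s^2*(1+α))] with hG
  have hMG : (1 - α • S) * G = (1 - α) • Y := by
    rw [hSe, hY, hG]
    exact aux_mg s t α hs0 hst h1α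
  have hMe : (1 - α • S) = !![1, -(α/s), -(α/s), -(α*t/s);
        -(α/s), 1, 0, 0;
        -(α/s), 0, 1, 0;
        -(α*t/s), 0, 0, 1] := by
    rw [hSe]
    ext i j
    fin_cases i <;> fin_cases j <;>
      simp [Matrix.sub_apply, Matrix.one_apply, Matrix.smul_apply,
        Matrix.vecHead, Matrix.vecTail] <;> ring
  have hdet : (1 - α • S).det = 1 - α^2 := by
    rw [hMe]; exact aux_det s t α hst hs0
  have hu : IsUnit (1 - α • S).det := by
    rw [hdet]
    exact isUnit_iff_ne_zero.2 (by nlinarith)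
  have hFG : F = G := by
    rw [hF]
    have h2 : (1 - α) • ((1 - α • S)⁻¹ * Y) = (1 - α • S)⁻¹ * ((1 - α) • Y) := by
      rw [Matrix.mul_smul]
    rw [h2, ← hMG, ← Matrix.mul_assoc, Matrix.nonsing_inv_mul _ hu, Matrix.one_mul]
  rw [hFG]
  have hG31 : G 3 1 = 2*α^2*t/(s^2*(1+α)) := by rw [hG]; simp [Matrix.vecHead, Matrix.vecTail]
  have hG30 : G 3 0 = α*t/(s*(1+α)) := by rw [hG]; simp [Matrix.vecHead, Matrix.vecTail]
  have key : G 3 1 - G 3 0 = (α*t/(s^2*(1+α))) * (2*α - s) := by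
    rw [hG31, hG30]; field_simp
  have hC : 0 < α*t/(s^2*(1+α)) := by positivity
  rw [key]
  rcases lt_trichotomy (2*α - s) 0 with h | h | h
  · rw [Real.sign_of_neg h, Real.sign_of_neg (mul_neg_of_pos_of_neg hC h)]
  · rw [h, mul_zero]
  · rw [Real.sign_of_pos h, Real.sign_of_pos (mul_pos hC h)]
end

section
/- In the smoothing-based algorithm on the 4-node graph with S + λ·diag(1,1,0,1) = [[1+λ,0,−1,0],[0,1+λ,−1,0],[−1,−1,x+2,−x],[0,0,−x,x+λ]], and label vector Y = (−1,−1,0,1)ᵀ, the third entry of F* = (S + λ·diag(1,1,0,1))^{-1} λY has the same sign as −2λ − x + λx, for all λ > 0 and x ≥ 0 (whenever the matrix is invertible). -/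
/-- In the smoothing-based algorithm on the 4-node graph, the third entry of
`F* = (S + λ·diag(1,1,0,1))^{-1} λY` has the same sign as `−2λ − x + λx`, for all
`λ > 0` and `x ≥ 0`, whenever the matrix is invertible. -/
theorem stmt_8 (l x : ℝ) (hl : 0 < l) (hx : 0 ≤ x)
    (M : Matrix (Fin 4) (Fin 4) ℝ)
    (hM : M = !![1 + l, 0, (-1 : ℝ), 0; 0, 1 + l, -1, 0; -1, -1, x + 2, -x; 0, 0, -x, x + l])
    (hMinv : IsUnit M.det)
    (Y : Fin 4 → ℝ) (hY : Y = ![-1, -1, 0, 1])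
    (F : Fin 4 → ℝ) (hF : F = Matrix.mulVec M⁻¹ (l • Y)) :
    Real.sign (F 2) = Real.sign (-2 * l - x + l * x) := by
  have hdet : M.det = l * (2 * l * (1 + l) + x * ((1 + l) * (3 + l))) := by
    rw [hM]
    simp [Matrix.det_succ_row_zero, Fin.sum_univ_succ, Fin.succAbove]
    ring
  have hdpos : 0 < M.det := by
    rw [hdet]
    apply mul_pos hl
    have h1 : (0:ℝ) < 2 * l * (1 + l) := by nlinarith
    have h2 : (0:ℝ) ≤ x * ((1 + l) * (3 + l)) := mul_nonneg hx (by nlinarith)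
    linarith
  have hcr := Matrix.det_smul_inv_mulVec_eq_cramer M (l • Y) hMinv
  have hcr2 : M.det * F 2 = Matrix.cramer M (l • Y) 2 := by
    rw [hF]
    have := congrFun hcr 2
    simpa [Matrix.smul_mulVec] using this
  have hnum : Matrix.cramer M (l • Y) 2 = l * (l + 1) * (-2 * l - x + l * x) := by
    rw [Matrix.cramer_apply, hM, hY]
    simp [Matrix.det_succ_row_zero, Fin.sum_univ_succ, Fin.succAbove, Matrix.updateCol_apply]
    ring
  have hF2 : M.det * F 2 = l * (l + 1) * (-2 * l - x + l * x) := by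
    rw [hcr2, hnum]
  set t := -2 * l - x + l * x with ht
  have hc : 0 < l * (l + 1) := by nlinarith
  rcases lt_trichotomy t 0 with h | h | h
  · have hF2neg : F 2 < 0 := by nlinarith [mul_pos hc (neg_pos.mpr h)]
    rw [Real.sign_of_neg hF2neg, Real.sign_of_neg h]
  · have h0 : F 2 = 0 := by
      have h' : M.det * F 2 = 0 := by rw [hF2, h]; ring
      rcases mul_eq_zero.mp h' with h1 | h2
      · exact absurd h1 hdpos.ne'
      · exact h2
    rw [h0, h]
  · have hF2pos : 0 < F 2 := by nlinarith [mul_pos hc h]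
    rw [Real.sign_of_pos hF2pos, Real.sign_of_pos h]
end

section
/- For c ∈ (0,1) and the 4-node star graph with S = D^{-δ} W D^{δ−1} where W_{12}=W_{21}=W_{13}=W_{31}=1, W_{14}=W_{41}=x, the determinant det(I − c·S) equals 1 − c², independent of δ and x. -/
set_option maxHeartbeats 1000000 in
/-- For `c ∈ (0,1)` and the 4-node star graph with `S = D^{-δ} W D^{δ−1}`, the
determinant `det(I − c·S)` equals `1 − c²`, independent of `δ` and `x`. -/
theorem stmt_9 (c δ x : ℝ) (hc : c ∈ Set.Ioo (0 : ℝ) 1) (hδ : δ ∈ Set.Ioo (0 : ℝ) 1)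
    (hx : 0 < x)
    (W S : Matrix (Fin 4) (Fin 4) ℝ)
    (hW : W = !![0, 1, 1, x; 1, 0, 0, 0; 1, 0, 0, 0; x, 0, 0, 0])
    (hS : S = Matrix.diagonal ![(x + 2) ^ (-δ), 1, 1, x ^ (-δ)] * W *
      Matrix.diagonal ![(x + 2) ^ (δ - 1), 1, 1, x ^ (δ - 1)]) :
    (1 - c • S).det = 1 - c ^ 2 := by
  have hx2 : (0:ℝ) < x + 2 := by linarith
  have e : -δ + (δ - 1) = (-1 : ℝ) := by ring
  have h1 : (x + 2) ^ (-δ) * (x + 2) ^ (δ - 1) = (x + 2)⁻¹ := by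
    rw [← Real.rpow_add hx2, e, Real.rpow_neg_one]
  have h2 : x ^ (-δ) * x ^ (δ - 1) = x⁻¹ := by
    rw [← Real.rpow_add hx, e, Real.rpow_neg_one]
  have hM : 1 - c • S =
      !![1, -(c * (x + 2) ^ (-δ)), -(c * (x + 2) ^ (-δ)),
            -(c * ((x + 2) ^ (-δ) * x * x ^ (δ - 1)));
         -(c * (x + 2) ^ (δ - 1)), 1, 0, 0;
         -(c * (x + 2) ^ (δ - 1)), 0, 1, 0;
         -(c * (x ^ (-δ) * x * (x + 2) ^ (δ - 1))), 0, 0, 1] := by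
    subst hW hS
    ext i j
    fin_cases i <;> fin_cases j <;>
      simp [Matrix.mul_apply, Fin.sum_univ_four, Matrix.diagonal_apply, Matrix.one_apply,
        Matrix.vecHead, Matrix.vecTail, mul_comm]
  have key : (x + 2) ^ (-δ) * x * x ^ (δ - 1) * (x ^ (-δ) * x * (x + 2) ^ (δ - 1))
      = x * (x + 2)⁻¹ := by
    have h3 : (x + 2) ^ (-δ) * x * x ^ (δ - 1) * (x ^ (-δ) * x * (x + 2) ^ (δ - 1))
        = ((x + 2) ^ (-δ) * (x + 2) ^ (δ - 1)) * (x ^ (-δ) * x ^ (δ - 1)) * (x * x) := by ring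
    rw [h3, h1, h2]
    field_simp
  rw [hM]
  simp [Matrix.det_succ_row_zero, Fin.sum_univ_succ, Fin.succAbove]
  have hinv : (x + 2) * (x + 2)⁻¹ = 1 := mul_inv_cancel₀ (ne_of_gt hx2)
  linear_combination (-2*c^2) * h1 + (-c^2) * key + (-c^2) * hinv
end
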